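/- Let m ≥ 2 be an integer, p, q integers with 1 ≤ p ≤ m−1, 1 ≤ q ≤ m+1 and p ≡ q (mod 2), and set p' = m−p, q' = m+2−q. Then γ^m_{−p,q}(0) = h^m_{p,q} + pq/2 and γ^m_{−p,q}(−1) = h^m_{p,q} + p'q'/2; moreover, for every integer n ≠ 0 one has γ^m_{p,q}(n) > h^m_{p,q} + max(pq, p'q')/2, and for every integer n ∉ {0, −1} one has γ^m_{−p,q}(n) > h^m_{p,q} + max(pq, p'q')/2. In other words, γ^m_{p,q}(0), γ^m_{−p,q}(0) and γ^m_{−p,q}(−1) are the three lowest numbers of the set {γ^m_{p,q}(n), γ^m_{−p,q}(n) : n ∈ ℤ}. -/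

import Mathlib

/-- `γ^m_{p,q}(n) = ((2m(m+2)n − (m+2)p + mq)² − 4) / (8m(m+2))`. -/
noncomputable def gammaPQ (m : ℝ) (p q n : ℤ) : ℝ :=
  ((2 * m * (m + 2) * (n : ℝ) - (m + 2) * (p : ℝ) + m * (q : ℝ)) ^ 2 - 4) / (8 * m * (m + 2))

/-- `h^m_{p,q} = (((m+2)p − mq)² − 4) / (8m(m+2))`. -/
noncomputable def hPQ (m : ℝ) (p q : ℤ) : ℝ :=
  (((m + 2) * (p : ℝ) - m * (q : ℝ)) ^ 2 - 4) / (8 * m * (m + 2))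

/-!
Everything rests on the factorisation
`γ^m_{−p,q}(n) − h^m_{p,q} = (mn + p)((m+2)n + q)/2`,
which follows from `((m+2)p + mq)² − ((m+2)p − mq)² = 4m(m+2)pq`. Replacing `p` by `−p` gives
`γ^m_{p,q}(n) − h^m_{p,q} = (pq + (mn − p)((m+2)n + q))/2`. At `n = 0` and `n = −1` the product
`(mn + p)((m+2)n + q)` is `pq` and `p'q'`. For every other `n` the two factors of the relevant
product have the same sign, and comparing their absolute values with `p, p' = m − p` and
`q, q' = m + 2 − q` factor by factor gives the strict bounds.
-/

theorem gammaPQ_zero (m : ℝ) (p q : ℤ) : gammaPQ m p q 0 = hPQ m p q := by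
  unfold gammaPQ hPQ
  ring_nf

theorem gammaPQ_neg_eq {m : ℝ} (hm : m ≠ 0) (hm2 : m + 2 ≠ 0) (p q n : ℤ) :
    gammaPQ m (-p) q n = hPQ m p q + (m * n + p) * ((m + 2) * n + q) / 2 := by
  unfold gammaPQ hPQ
  push_cast
  field_simp
  ring

theorem hPQ_neg {m : ℝ} (hm : m ≠ 0) (hm2 : m + 2 ≠ 0) (p q : ℤ) :
    hPQ m (-p) q = hPQ m p q + p * q / 2 := by
  rw [← gammaPQ_zero, gammaPQ_neg_eq hm hm2]
  push_cast
  ring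

theorem gammaPQ_eq {m : ℝ} (hm : m ≠ 0) (hm2 : m + 2 ≠ 0) (p q n : ℤ) :
    gammaPQ m p q n = hPQ m p q + (p * q + (m * n - p) * ((m + 2) * n + q)) / 2 := by
  have h := gammaPQ_neg_eq hm hm2 (-p) q n
  rw [neg_neg, hPQ_neg hm hm2] at h
  rw [h]
  push_cast
  ring

section IntegerBounds

variable {m p q : ℤ}

theorem max_lt_add_mul_of_ne_zero (hp : 0 < p) (hpm : p < m) (hq : 0 < q) (hqm : q < m + 2)
    {n : ℤ} (hn : n ≠ 0) :
    max (p * q) ((m - p) * (m + 2 - q)) < p * q + (m * n - p) * ((m + 2) * n + q) := by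
  rcases hn.lt_or_gt with hn | hn
  · have h₁ : m + p ≤ p - m * n := by nlinarith
    have h₂ : m + 2 - q ≤ -((m + 2) * n + q) := by nlinarith
    have := mul_le_mul h₁ h₂ (by omega) (by omega)
    refine max_lt ?_ ?_ <;> nlinarith
  · have h₁ : m - p ≤ m * n - p := by nlinarith
    have h₂ : m + 2 + q ≤ (m + 2) * n + q := by nlinarith
    have := mul_le_mul h₁ h₂ (by omega) (by omega)
    refine max_lt ?_ ?_ <;> nlinarith

theorem max_lt_mul_of_ne_zero_of_ne_neg_one (hp : 0 < p) (hpm : p < m) (hq : 0 < q)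
    (hqm : q < m + 2) {n : ℤ} (hn₀ : n ≠ 0) (hn₁ : n ≠ -1) :
    max (p * q) ((m - p) * (m + 2 - q)) < (m * n + p) * ((m + 2) * n + q) := by
  rcases hn₀.lt_or_gt with hn | hn
  · have h₁ : 2 * m - p ≤ -(m * n + p) := by nlinarith [show n ≤ -2 by omega]
    have h₂ : 2 * (m + 2) - q ≤ -((m + 2) * n + q) := by nlinarith [show n ≤ -2 by omega]
    have := mul_le_mul h₁ h₂ (by omega) (by omega)
    refine max_lt ?_ ?_ <;> nlinarith
  · have h₁ : m + p ≤ m * n + p := by nlinarith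
    have h₂ : m + 2 + q ≤ (m + 2) * n + q := by nlinarith
    have := mul_le_mul h₁ h₂ (by omega) (by omega)
    refine max_lt ?_ ?_ <;> nlinarith

end IntegerBounds

theorem gamma_three_lowest_general (m : ℤ) (hm : 2 ≤ m) (p q : ℤ)
    (hp1 : 1 ≤ p) (hp2 : p ≤ m - 1) (hq1 : 1 ≤ q) (hq2 : q ≤ m + 1) :
    gammaPQ (m : ℝ) (-p) q 0 = hPQ (m : ℝ) p q + (p : ℝ) * q / 2 ∧
    gammaPQ (m : ℝ) (-p) q (-1) = hPQ (m : ℝ) p q + ((m : ℝ) - p) * ((m : ℝ) + 2 - q) / 2 ∧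
    (∀ n : ℤ, n ≠ 0 →
      hPQ (m : ℝ) p q + max ((p : ℝ) * q) (((m : ℝ) - p) * ((m : ℝ) + 2 - q)) / 2 <
        gammaPQ (m : ℝ) p q n) ∧
    (∀ n : ℤ, n ≠ 0 → n ≠ -1 →
      hPQ (m : ℝ) p q + max ((p : ℝ) * q) (((m : ℝ) - p) * ((m : ℝ) + 2 - q)) / 2 <
        gammaPQ (m : ℝ) (-p) q n) := by
  have hm₀ : (m : ℝ) ≠ 0 := by exact_mod_cast (by omega : m ≠ 0)
  have hm₂ : (m : ℝ) + 2 ≠ 0 := by exact_mod_cast (by omega : m + 2 ≠ 0)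
  refine ⟨?_, ?_, fun n hn => ?_, fun n hn₀ hn₁ => ?_⟩
  · rw [gammaPQ_neg_eq hm₀ hm₂]
    push_cast
    ring
  · rw [gammaPQ_neg_eq hm₀ hm₂]
    push_cast
    ring
  · have key : ((max (p * q) ((m - p) * (m + 2 - q)) : ℤ) : ℝ) <
        ((p * q + (m * n - p) * ((m + 2) * n + q) : ℤ) : ℝ) :=
      Int.cast_lt.2 (max_lt_add_mul_of_ne_zero (by omega) (by omega) (by omega) (by omega) hn)
    push_cast at key
    rw [gammaPQ_eq hm₀ hm₂]
    linarith
  · have key : ((max (p * q) ((m - p) * (m + 2 - q)) : ℤ) : ℝ) <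
        (((m * n + p) * ((m + 2) * n + q) : ℤ) : ℝ) :=
      Int.cast_lt.2 (max_lt_mul_of_ne_zero_of_ne_neg_one (by omega) (by omega) (by omega)
        (by omega) hn₀ hn₁)
    push_cast at key
    rw [gammaPQ_neg_eq hm₀ hm₂]
    linarith

/-- For `m ≥ 2`, `1 ≤ p ≤ m−1`, `1 ≤ q ≤ m+1`, `p ≡ q (mod 2)`, `p' = m−p`, `q' = m+2−q`:
`γ^m_{−p,q}(0) = h^m_{p,q} + pq/2`, `γ^m_{−p,q}(−1) = h^m_{p,q} + p'q'/2`, and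
`γ^m_{p,q}(0)`, `γ^m_{−p,q}(0)`, `γ^m_{−p,q}(−1)` are the three lowest numbers of
`{γ^m_{p,q}(n), γ^m_{−p,q}(n) : n ∈ ℤ}`. -/
theorem gamma_three_lowest (m : ℤ) (hm : 2 ≤ m) (p q : ℤ)
    (hp1 : 1 ≤ p) (hp2 : p ≤ m - 1) (hq1 : 1 ≤ q) (hq2 : q ≤ m + 1)
    (hpar : p % 2 = q % 2) :
    gammaPQ (m : ℝ) (-p) q 0 = hPQ (m : ℝ) p q + (p : ℝ) * q / 2 ∧
    gammaPQ (m : ℝ) (-p) q (-1) = hPQ (m : ℝ) p q + ((m : ℝ) - p) * ((m : ℝ) + 2 - q) / 2 ∧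
    (∀ n : ℤ, n ≠ 0 →
      hPQ (m : ℝ) p q + max ((p : ℝ) * q) (((m : ℝ) - p) * ((m : ℝ) + 2 - q)) / 2 <
        gammaPQ (m : ℝ) p q n) ∧
    (∀ n : ℤ, n ≠ 0 → n ≠ -1 →
      hPQ (m : ℝ) p q + max ((p : ℝ) * q) (((m : ℝ) - p) * ((m : ℝ) + 2 - q)) / 2 <
        gammaPQ (m : ℝ) (-p) q n) :=
  gamma_three_lowest_general m hm p q hp1 hp2 hq1 hq2
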